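/- Let p1, p0, q1, q0 be polynomials in ℝ[x,y] (formally, MvPolynomial (Fin 2) ℝ) and define S0 = (p0 − q0)² − (p1 − q1)·(p0·q1 − q0·p1). Suppose v : Fin 2 → ℝ satisfies S0(v) = 0, (∂S0/∂x)(v) = 0, (∂S0/∂y)(v) = 0 and p1(v) ≠ q1(v), and set z0 = −(q0(v) − p0(v)) / (q1(v) − p1(v)). Then z0² + p1(v)·z0 + p0(v) = 0, z0² + q1(v)·z0 + q0(v) = 0, and the two gradient vectors (Fx, Fy, Fz) and (Gx, Gy, Gz) in ℝ³ are linearly dependent over ℝ, where Fx = z0·(∂p1/∂x)(v) + (∂p0/∂x)(v), Fy = z0·(∂p1/∂y)(v) + (∂p0/∂y)(v), Fz = 2·z0 + p1(v), and Gx, Gy, Gz are defined analogously with q1, q0 in place of p1, p0. (In particular, the two quadrics meet at (v, z0) and have the same tangent plane there.) -/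

import Mathlib

/-!
Writing `D = p1 - q1` and `L = f - g = D z + (p0 - q0)`, the resultant factors as
`S0 = D² f - L (D ∂f/∂z - L)` for every `z`. The choice of `z0` makes `L` vanish at `(v, z0)`,
so `S0(v) = D² f(v, z0)` forces `f = g = 0` there. Differentiating the factorization in a
direction of the plane and using `f = L = 0` gives `∂S0(v) = D (Fz Gx - Gz Fx)`, so the
vanishing of the partials of `S0` makes the 2×2 minors of the two gradients vanish.
-/

open MvPolynomial

/-- The resultant in `z` of `z ^ 2 + p1 * z + p0` and `z ^ 2 + q1 * z + q0`. -/
def quadResultant {R : Type*} [CommRing R] (p1 p0 q1 q0 : R) : R :=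
  (p0 - q0) ^ 2 - (p1 - q1) * (p0 * q1 - q0 * p1)

section quadResultant

variable {R : Type*} [CommRing R]

theorem quadResultant_eq_of_common_root {p1 p0 q1 q0 z : R}
    (hroot : (p1 - q1) * z + (p0 - q0) = 0) :
    quadResultant p1 p0 q1 q0 = (p1 - q1) ^ 2 * (z ^ 2 + p1 * z + p0) := by
  unfold quadResultant
  linear_combination (-(p1 - q1) * (2 * z + p1) + ((p1 - q1) * z + (p0 - q0))) * hroot

theorem map_quadResultant {S : Type*} [CommRing S] (φ : R →+* S) (p1 p0 q1 q0 : R) :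
    φ (quadResultant p1 p0 q1 q0) = quadResultant (φ p1) (φ p0) (φ q1) (φ q0) := by
  simp only [quadResultant, map_sub, map_mul, map_pow]

theorem eval_pderiv_quadResultant {σ : Type*} (p1 p0 q1 q0 : MvPolynomial σ R) (v : σ → R)
    (i : σ) {z : R} (hroot : (eval v p1 - eval v q1) * z + (eval v p0 - eval v q0) = 0)
    (hf : z ^ 2 + eval v p1 * z + eval v p0 = 0) :
    eval v (pderiv i (quadResultant p1 p0 q1 q0)) =
      (eval v p1 - eval v q1) *
        ((2 * z + eval v p1) * (z * eval v (pderiv i q1) + eval v (pderiv i q0)) -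
          (2 * z + eval v q1) * (z * eval v (pderiv i p1) + eval v (pderiv i p0))) := by
  simp only [quadResultant, pow_two, map_sub, pderiv_mul, eval_mul, eval_add]
  -- coefficients from differentiating `D² f - L (D ∂f/∂z - L)` (header notation)
  linear_combination
    2 * (eval v p1 - eval v q1) * (eval v (pderiv i p1) - eval v (pderiv i q1)) * hf +
      (2 * (eval v (pderiv i p0) - eval v (pderiv i q0)) -
        (eval v p1 - eval v q1) * eval v (pderiv i p1) -
        (eval v (pderiv i p1) - eval v (pderiv i q1)) * eval v p1) * hroot

end quadResultant

theorem not_linearIndependent_pair_of_minors_eq_zero {K ι : Type*} [Field K] {u w : ι → K}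
    (k : ι) (hk : u k ≠ 0 ∨ w k ≠ 0) (hminor : ∀ j, u k * w j = w k * u j) :
    ¬ LinearIndependent K ![u, w] := by
  rw [LinearIndependent.pair_iff]
  intro hli
  have hcomb : w k • u + (-u k) • w = 0 := by
    funext j
    simp only [Pi.add_apply, Pi.smul_apply, smul_eq_mul, Pi.zero_apply]
    linear_combination -hminor j
  obtain ⟨hw, hu⟩ := hli _ _ hcomb
  exact hk.elim (· (neg_eq_zero.mp hu)) (· hw)

/-- At a singular point of the cutcurve outside the line p1 = q1, the point
    (v, z0) lies on both quadrics and the gradients of f and g there are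
    linearly dependent (same tangent plane). -/
theorem stmt_8 (p1 p0 q1 q0 : MvPolynomial (Fin 2) ℝ)
    (S0 : MvPolynomial (Fin 2) ℝ)
    (hS0 : S0 = (p0 - q0) ^ 2 - (p1 - q1) * (p0 * q1 - q0 * p1))
    (v : Fin 2 → ℝ)
    (hv : eval v S0 = 0)
    (hvx : eval v (pderiv (0 : Fin 2) S0) = 0)
    (hvy : eval v (pderiv (1 : Fin 2) S0) = 0)
    (hne : eval v p1 ≠ eval v q1)
    (z0 : ℝ)
    (hz0 : z0 = -(eval v q0 - eval v p0) / (eval v q1 - eval v p1))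
    (Fx Fy Fz Gx Gy Gz : ℝ)
    (hFx : Fx = z0 * eval v (pderiv (0 : Fin 2) p1) + eval v (pderiv (0 : Fin 2) p0))
    (hFy : Fy = z0 * eval v (pderiv (1 : Fin 2) p1) + eval v (pderiv (1 : Fin 2) p0))
    (hFz : Fz = 2 * z0 + eval v p1)
    (hGx : Gx = z0 * eval v (pderiv (0 : Fin 2) q1) + eval v (pderiv (0 : Fin 2) q0))
    (hGy : Gy = z0 * eval v (pderiv (1 : Fin 2) q1) + eval v (pderiv (1 : Fin 2) q0))
    (hGz : Gz = 2 * z0 + eval v q1) :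
    z0 ^ 2 + eval v p1 * z0 + eval v p0 = 0 ∧
    z0 ^ 2 + eval v q1 * z0 + eval v q0 = 0 ∧
    ¬ LinearIndependent ℝ ![(![Fx, Fy, Fz] : Fin 3 → ℝ), ![Gx, Gy, Gz]] := by
  obtain rfl : S0 = quadResultant p1 p0 q1 q0 := hS0
  subst hFx hFy hFz hGx hGy hGz
  have hD : eval v p1 - eval v q1 ≠ 0 := sub_ne_zero.mpr hne
  have hroot : (eval v p1 - eval v q1) * z0 + (eval v p0 - eval v q0) = 0 := by
    rw [hz0]
    field_simp [sub_ne_zero.mpr hne.symm]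
    ring
  have hf : z0 ^ 2 + eval v p1 * z0 + eval v p0 = 0 := by
    rw [map_quadResultant, quadResultant_eq_of_common_root hroot] at hv
    exact (mul_eq_zero.mp hv).resolve_left (pow_ne_zero 2 hD)
  have hminor (i : Fin 2) (hi : eval v (pderiv i (quadResultant p1 p0 q1 q0)) = 0) :
      (2 * z0 + eval v p1) * (z0 * eval v (pderiv i q1) + eval v (pderiv i q0)) =
        (2 * z0 + eval v q1) * (z0 * eval v (pderiv i p1) + eval v (pderiv i p0)) :=
    sub_eq_zero.mp ((mul_eq_zero.mp
      ((eval_pderiv_quadResultant p1 p0 q1 q0 v i hroot hf).symm.trans hi)).resolve_left hD)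
  have hz : 2 * z0 + eval v p1 ≠ 0 ∨ 2 * z0 + eval v q1 ≠ 0 := by
    contrapose! hne
    linear_combination hne.1 - hne.2
  refine ⟨hf, by linear_combination hf - hroot,
    not_linearIndependent_pair_of_minors_eq_zero 2 hz fun j => ?_⟩
  fin_cases j
  · exact hminor 0 hvx
  · exact hminor 1 hvy
  · exact mul_comm _ _
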